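/- arXiv:2105.01022 — 3 statements merged into one kernel-verified Lean document; each statement's English description precedes it below -/
import Mathlib

section
/- Let π be a group, ρ : π → SL(2,F) an irreducible representation over a field F of characteristic 0 equipped with a non-Archimedean absolute value |·|, with valuation ring R. If the character χ(g) = tr(ρ(g)) satisfies χ(g) ∈ R for all g ∈ π, then the image of ρ is bounded: there exists a bounded R-submodule of Mat(2,F) containing ρ(π). -/
open Matrix Submodule

/-! Let `S` be the linear span of `ρ(π)`. If `B ∈ S` is trace-orthogonal to every `ρ(g)`, then
`N = ρ(g) B` has `tr N = tr N² = 0`, so `N² = 0` (characteristic `≠ 2`); hence `B` kills the orbit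
`ρ(π) (B x)`, which spans `F²` by irreducibility, so `B = 0`. Thus the trace pairing separates the
points of `S`, and already finitely many `g₁, …, gₙ` do. Inverting, `ρ(u) = ∑ₖ tr(ρ(gₖ u)) Xₖ` for
fixed `Xₖ ∈ S`, and `|tr| ≤ 1` bounds the entries of `ρ(u)` by `∑ₖ |Xₖ|`. -/

theorem Matrix.mul_self_eq_zero_of_trace_eq_zero {R : Type*} [CommRing R] [IsDomain R]
    [NeZero (2 : R)] {N : Matrix (Fin 2) (Fin 2) R} (h₁ : N.trace = 0)
    (h₂ : (N * N).trace = 0) : N * N = 0 := by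
  have hCH : N * N = -(N.det • 1) := by
    have := N.aeval_self_charpoly
    rw [charpoly_fin_two, h₁] at this
    simp only [map_add, Polynomial.aeval_X, map_mul, Polynomial.aeval_C,
      map_zero, zero_mul, sub_zero, Algebra.algebraMap_eq_smul_one, pow_two] at this
    exact eq_neg_of_add_eq_zero_left this
  have hdet : N.det = 0 := by
    rw [hCH] at h₂
    simpa [trace_neg, trace_smul, trace_one, NeZero.ne] using h₂
  simp [hCH, hdet]

theorem Matrix.eq_zero_of_mulVec_orbit_eq_zero {ι F : Type*} [Field F]
    {A : ι → Matrix (Fin 2) (Fin 2) F}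
    (hirr : ¬ ∃ w : Fin 2 → F, w ≠ 0 ∧ ∀ i, ∃ c : F, A i *ᵥ w = c • w)
    {B : Matrix (Fin 2) (Fin 2) F} {u : Fin 2 → F} (hu : u ≠ 0) (hBu : B *ᵥ u = 0)
    (hBAu : ∀ i, B *ᵥ (A i *ᵥ u) = 0) : B = 0 := by
  by_contra hB
  have hker : F ∙ u = LinearMap.ker (toLin' B) := by
    refine eq_of_le_of_finrank_le ((span_singleton_le_iff_mem _ _).mpr hBu) ?_
    have hlt := finrank_lt (LinearMap.ker_eq_top.not.mpr (toLin'.map_ne_zero_iff.mpr hB))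
    rw [finrank_span_singleton hu]
    simp only [Module.finrank_fin_fun] at hlt
    omega
  refine hirr ⟨u, hu, fun i => ?_⟩
  obtain ⟨c, hc⟩ := mem_span_singleton.mp (hker ▸ hBAu i : A i *ᵥ u ∈ F ∙ u)
  exact ⟨c, hc.symm⟩

theorem MonoidHom.mul_mem_span_range {R M A : Type*} [CommSemiring R] [Monoid M] [Semiring A]
    [Algebra R A] (f : M →* A) {a b : A} (ha : a ∈ span R (Set.range f))
    (hb : b ∈ span R (Set.range f)) : a * b ∈ span R (Set.range f) := by
  have hab := mul_mem_mul ha hb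
  rw [span_mul_span] at hab
  refine span_mono ?_ hab
  rintro _ ⟨_, ⟨g, rfl⟩, _, ⟨h, rfl⟩, rfl⟩
  exact ⟨g * h, map_mul f g h⟩

theorem Module.exists_fin_eq_sum_smul_of_separating_dual {K V ι : Type*} [Field K]
    [AddCommGroup V] [Module K V] [FiniteDimensional K V] (φ : ι → Module.Dual K V)
    (hφ : ∀ x, (∀ i, φ i x = 0) → x = 0) :
    ∃ (n : ℕ) (i : Fin n → ι) (X : Fin n → V), ∀ x, x = ∑ k, φ (i k) x • X k := by
  obtain ⟨f, hf, hspan, -⟩ := exists_fun_fin_finrank_span_eq K (Set.range φ)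
  choose i hi using hf
  set L : V →ₗ[K] (Fin (Module.finrank K (span K (Set.range φ))) → K) :=
    LinearMap.pi fun k => φ (i k)
  have hL : LinearMap.ker L = ⊥ := by
    refine LinearMap.ker_eq_bot'.mpr fun x hx => hφ x fun j => ?_
    have hle : span K (Set.range f) ≤ LinearMap.ker (Module.Dual.eval K V x) := by
      refine span_le.mpr ?_
      rintro _ ⟨k, rfl⟩
      simpa [L, ← hi k] using congrFun hx k
    exact hle (by rw [hspan]; exact subset_span ⟨j, rfl⟩)
  obtain ⟨r, hr⟩ := L.exists_leftInverse_of_injective hL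
  refine ⟨_, i, fun k => r fun l => if k = l then 1 else 0, fun x => ?_⟩
  calc x = r (L x) := (LinearMap.congr_fun hr x).symm
    _ = _ := LinearMap.pi_apply_eq_sum_univ r (L x)

theorem Matrix.eq_zero_of_trace_mul_eq_zero {G F : Type*} [Group G] [Field F] [NeZero (2 : F)]
    (ρ : G →* Matrix (Fin 2) (Fin 2) F)
    (hirr : ¬ ∃ w : Fin 2 → F, w ≠ 0 ∧ ∀ g, ∃ c : F, ρ g *ᵥ w = c • w)
    {B : Matrix (Fin 2) (Fin 2) F} (hB : B ∈ span F (Set.range ρ))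
    (htr : ∀ g, (ρ g * B).trace = 0) : B = 0 := by
  have htr_span : span F (Set.range ρ) ≤
      LinearMap.ker (traceLinearMap (Fin 2) F F ∘ₗ LinearMap.mulRight F B) := by
    refine span_le.mpr ?_
    rintro _ ⟨g, rfl⟩
    exact htr g
  have hnil : ∀ g, ρ g * B * (ρ g * B) = 0 := fun g => by
    refine mul_self_eq_zero_of_trace_eq_zero (htr g) ?_
    have hmem : ρ g * B * ρ g ∈ span F (Set.range ρ) :=
      ρ.mul_mem_span_range (ρ.mul_mem_span_range (subset_span ⟨g, rfl⟩) hB)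
        (subset_span ⟨g, rfl⟩)
    simpa [mul_assoc] using htr_span hmem
  by_contra hB0
  obtain ⟨x, hx⟩ : ∃ x, B *ᵥ x ≠ 0 := by
    by_contra! h
    exact hB0 (toLin'.map_eq_zero_iff.mp (LinearMap.ext h))
  have hBρBx : ∀ g, B *ᵥ (ρ g *ᵥ (B *ᵥ x)) = 0 := fun g => by
    calc B *ᵥ (ρ g *ᵥ (B *ᵥ x)) = (ρ g⁻¹ * (ρ g * B * (ρ g * B))) *ᵥ x := by
          simp only [mulVec_mulVec, ← mul_assoc, ← map_mul, inv_mul_cancel, map_one, one_mul]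
      _ = 0 := by rw [hnil, mul_zero, zero_mulVec]
  exact hB0 (eq_zero_of_mulVec_orbit_eq_zero hirr hx (by simpa using hBρBx 1) hBρBx)

theorem AbsoluteValue.apply_sum_mul_le_of_le_one {ι F : Type*} [Field F] (v : AbsoluteValue F ℝ)
    (s : Finset ι) {c : ι → F} (hc : ∀ k ∈ s, v (c k) ≤ 1) (x : ι → F) :
    v (∑ k ∈ s, c k * x k) ≤ ∑ k ∈ s, v (x k) := by
  refine (v.sum_le _ _).trans (Finset.sum_le_sum fun k hk => ?_)
  rw [map_mul]
  exact mul_le_of_le_one_left (v.nonneg _) (hc k hk)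

theorem stmt14_general (F : Type*) [Field F] [CharZero F] (v : AbsoluteValue F ℝ)
    (π : Type*) [Group π]
    (ρ : π →* Matrix.SpecialLinearGroup (Fin 2) F)
    (hirr : ¬ ∃ w : Fin 2 → F, w ≠ 0 ∧ ∀ g : π, ∃ c : F,
        Matrix.mulVec (ρ g : Matrix (Fin 2) (Fin 2) F) w = c • w)
    (hχ : ∀ g : π, v ((ρ g : Matrix (Fin 2) (Fin 2) F).trace) ≤ 1) :
    ∃ C : ℝ, ∀ g : π, ∀ i j, v ((ρ g : Matrix (Fin 2) (Fin 2) F) i j) ≤ C := by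
  set ρ' := SpecialLinearGroup.coeMonoidHom.comp ρ
  set S := span F (Set.range ρ')
  obtain ⟨n, γ, X, hX⟩ := Module.exists_fin_eq_sum_smul_of_separating_dual
    (fun g => (traceLinearMap (Fin 2) F F ∘ₗ LinearMap.mulLeft F (ρ' g)).domRestrict S)
    fun B hB => Subtype.ext (eq_zero_of_trace_mul_eq_zero ρ' hirr B.2 hB)
  refine ⟨∑ k, ∑ p : Fin 2 × Fin 2, v ((X k : Matrix (Fin 2) (Fin 2) F) p.1 p.2),
    fun g i j => ?_⟩
  have hρg : (ρ g : Matrix (Fin 2) (Fin 2) F) =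
      ∑ k, (ρ (γ k * g) : Matrix (Fin 2) (Fin 2) F).trace • (X k : Matrix (Fin 2) (Fin 2) F) := by
    simpa [ρ'] using congrArg Subtype.val (hX ⟨ρ' g, subset_span ⟨g, rfl⟩⟩)
  calc v ((ρ g : Matrix (Fin 2) (Fin 2) F) i j)
      ≤ ∑ k, v ((X k : Matrix (Fin 2) (Fin 2) F) i j) := by
        simp only [hρg, Matrix.sum_apply, Matrix.smul_apply, smul_eq_mul]
        exact v.apply_sum_mul_le_of_le_one _ (fun k _ => hχ _) _
    _ ≤ _ := Finset.sum_le_sum fun k _ =>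
        Finset.single_le_sum (f := fun p : Fin 2 × Fin 2 => v ((X k : Matrix _ _ F) p.1 p.2))
          (fun _ _ => v.nonneg _) (Finset.mem_univ (i, j))

/-- If `ρ : π → SL(2,F)` is an irreducible representation over a non-Archimedean valued
field `F` of characteristic `0` with valuation ring `R`, and the character
`χ(g) = tr(ρ(g))` takes values in `R` (i.e. `v (χ g) ≤ 1`), then the image of `ρ` is
bounded: the matrix entries of `ρ(π)` are uniformly bounded in absolute value. -/
theorem stmt14 (F : Type*) [Field F] [CharZero F] (v : AbsoluteValue F ℝ)
    (hna : IsNonarchimedean (v : F → ℝ)) (π : Type*) [Group π]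
    (ρ : π →* Matrix.SpecialLinearGroup (Fin 2) F)
    (hirr : ¬ ∃ w : Fin 2 → F, w ≠ 0 ∧ ∀ g : π, ∃ c : F,
        Matrix.mulVec (ρ g : Matrix (Fin 2) (Fin 2) F) w = c • w)
    (hχ : ∀ g : π, v ((ρ g : Matrix (Fin 2) (Fin 2) F).trace) ≤ 1) :
    ∃ C : ℝ, ∀ g : π, ∀ i j, v ((ρ g : Matrix (Fin 2) (Fin 2) F) i j) ≤ C :=
  stmt14_general F v π ρ hirr hχ
end

section
/- Let π be a finitely generated group and ρ, ρ̃ : π → SL(2,ℂ) representations with ρ irreducible. If tr(ρ̃(g)) = tr(ρ(g)) for every g ∈ π, then ρ̃ = τ ∘ ρ for some inner automorphism τ of GL(2,ℂ), i.e., ρ̃ is GL(2,ℂ)-conjugate to ρ. -/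
/-!
By Burnside's theorem, irreducibility of `ρ` makes the induced algebra map `F : ℂ[π] → M₂(ℂ)`
surjective. Since `tr F = tr F̃` on all of `ℂ[π]`, and hence `tr (F a * F b) = tr (F̃ a * F̃ b)`,
nondegeneracy of the trace form forces `ker F̃ ≤ ker F`; a dimension count makes `F̃` surjective
as well, and then the same argument gives `ker F = ker F̃`. So `F̃ ∘ F⁻¹` is a well-defined algebra
automorphism of `M₂(ℂ)` sending `ρ g` to `ρ̃ g`, and by Skolem–Noether it is conjugation by some
`T ∈ GL(2,ℂ)`.
-/

open Matrix

open Module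

/-- **Burnside's theorem**. -/
theorem IsSimpleModule.toModuleEnd_surjective_of_isAlgClosed {K A V : Type*} [Field K]
    [IsAlgClosed K] [Ring A] [Algebra K A] [AddCommGroup V] [Module K V] [Module A V]
    [IsScalarTower K A V] [FiniteDimensional K V] [IsSimpleModule A V] :
    Function.Surjective (Module.toModuleEnd K (S := A) V) := by
  have hscalar := IsSimpleModule.algebraMap_end_bijective_of_isAlgClosed (A := A) (V := V) K
  have : Module.Finite (End A V) V := Module.Finite.of_restrictScalars_finite K _ V
  intro f
  -- By Schur's lemma `End A V = K`, so `f` is `End A V`-linear and the density theorem applies.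
  let f' : End (End A V) V :=
    { toFun := f
      map_add' := f.map_add
      map_smul' := fun φ v => by
        obtain ⟨c, rfl⟩ := hscalar.2 φ
        simp }
  obtain ⟨a, ha⟩ := Module.Finite.toModuleEnd_moduleEnd_surjective f'
  exact ⟨a, LinearMap.ext fun v => congr($ha v)⟩

namespace Representation

variable {k G V : Type*} [Field k] [Monoid G] [AddCommGroup V] [Module k V]

theorem asAlgebraHom_surjective [IsAlgClosed k] [FiniteDimensional k V]
    (ρ : Representation k G V) [ρ.IsIrreducible] : Function.Surjective ρ.asAlgebraHom :=
  IsSimpleModule.toModuleEnd_surjective_of_isAlgClosed (K := k) (A := MonoidAlgebra k G)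
    (V := ρ.asModule)

theorem isIrreducible_of_finrank_eq_two (hV : finrank k V = 2) (ρ : Representation k G V)
    (h : ¬ ∃ v : V, v ≠ 0 ∧ ∀ g, ∃ c : k, ρ g v = c • v) : ρ.IsIrreducible := by
  have : FiniteDimensional k V := .of_finrank_pos (by omega)
  have : Nontrivial V := Module.nontrivial_of_finrank_eq_succ hV
  refine
    { exists_pair_ne := ⟨⊥, ⊤, fun heq => bot_ne_top congr(Subrepresentation.toSubmodule $heq)⟩
      eq_bot_or_eq_top := fun W => ?_ }
  by_contra! hW
  obtain ⟨hbot, htop⟩ : W.toSubmodule ≠ ⊥ ∧ W.toSubmodule ≠ ⊤ :=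
    ⟨fun heq => hW.1 (Subrepresentation.toSubmodule_injective heq),
     fun heq => hW.2 (Subrepresentation.toSubmodule_injective heq)⟩
  obtain ⟨v, hvW, hv⟩ := Submodule.exists_mem_ne_zero_of_ne_bot hbot
  have hline : W.toSubmodule = k ∙ v := by
    refine (Submodule.eq_of_le_of_finrank_le
      ((Submodule.span_singleton_le_iff_mem _ _).2 hvW) ?_).symm
    have := Submodule.finrank_lt htop
    rw [finrank_span_singleton hv]
    omega
  refine h ⟨v, hv, fun g => ?_⟩
  have := W.apply_mem_toSubmodule g hvW
  rw [hline, Submodule.mem_span_singleton] at this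
  exact this.imp fun c hc => hc.symm

end Representation

section OfSurjective

variable {R A B C : Type*} [CommSemiring R] [Semiring A] [Semiring B] [Semiring C] [Algebra R A]
  [Algebra R B] [Algebra R C]

noncomputable def AlgEquiv.ofSurjectiveOfApplyEqIff (F : A →ₐ[R] B) (F' : A →ₐ[R] C)
    (hF : Function.Surjective F) (hF' : Function.Surjective F')
    (h : ∀ a b, F a = F b ↔ F' a = F' b) : B ≃ₐ[R] C where
  toFun x := F' (Function.surjInv hF x)
  invFun y := F (Function.surjInv hF' y)
  left_inv x := by
    dsimp only
    rw [(h _ _).2 (Function.surjInv_eq hF' _), Function.surjInv_eq hF]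
  right_inv y := by
    dsimp only
    rw [(h _ _).1 (Function.surjInv_eq hF _), Function.surjInv_eq hF']
  map_mul' x y := by
    rw [← map_mul]
    exact (h _ _).1 (by simp only [map_mul, Function.surjInv_eq hF])
  map_add' x y := by
    rw [← map_add]
    exact (h _ _).1 (by simp only [map_add, Function.surjInv_eq hF])
  commutes' c := by
    rw [← F'.commutes]
    exact (h _ _).1 (by simp only [AlgHom.commutes, Function.surjInv_eq hF])

@[simp]
theorem AlgEquiv.ofSurjectiveOfApplyEqIff_apply (F : A →ₐ[R] B) (F' : A →ₐ[R] C)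
    (hF : Function.Surjective F) (hF' : Function.Surjective F')
    (h : ∀ a b, F a = F b ↔ F' a = F' b) (a : A) :
    AlgEquiv.ofSurjectiveOfApplyEqIff F F' hF hF' h (F a) = F' a :=
  (h _ _).1 (Function.surjInv_eq hF _)

end OfSurjective

section TraceEq

variable {K A n : Type*} [Fintype n] [DecidableEq n]

theorem AlgHom.apply_eq_zero_of_trace_eq [CommRing K] [Semiring A] [Algebra K A]
    {F F' : A →ₐ[K] Matrix n n K}
    (hF : Function.Surjective F) (htr : ∀ a, (F a).trace = (F' a).trace) {a : A}
    (ha : F' a = 0) : F a = 0 := by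
  refine ext_iff_trace_mul_left.2 fun X => ?_
  obtain ⟨b, rfl⟩ := hF X
  rw [mul_zero, ← map_mul, htr, map_mul, ha, mul_zero]

theorem AlgHom.surjective_of_trace_eq [Field K] [Semiring A] [Algebra K A]
    {F F' : A →ₐ[K] Matrix n n K} (hF : Function.Surjective F)
    (htr : ∀ a, (F a).trace = (F' a).trace) : Function.Surjective F' := by
  obtain ⟨σ, hσ⟩ := F.toLinearMap.exists_rightInverse_of_surjective (LinearMap.range_eq_top.2 hF)
  have hFσ (X : Matrix n n K) : F (σ X) = X := LinearMap.congr_fun hσ X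
  have hinj : Function.Injective (F'.toLinearMap ∘ₗ σ) := by
    refine (injective_iff_map_eq_zero _).2 fun X hX => ?_
    rw [← hFσ X]
    exact AlgHom.apply_eq_zero_of_trace_eq hF htr hX
  intro Y
  obtain ⟨X, hX⟩ := LinearMap.injective_iff_surjective.1 hinj Y
  exact ⟨σ X, hX⟩

theorem AlgHom.exists_algEquiv_apply_eq_of_trace_eq [Field K] [Ring A] [Algebra K A]
    {F F' : A →ₐ[K] Matrix n n K} (hF : Function.Surjective F)
    (htr : ∀ a, (F a).trace = (F' a).trace) :
    ∃ Φ : Matrix n n K ≃ₐ[K] Matrix n n K, ∀ a, Φ (F a) = F' a := by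
  have hF' := AlgHom.surjective_of_trace_eq hF htr
  refine ⟨.ofSurjectiveOfApplyEqIff F F' hF hF' fun a b => ?_, by simp⟩
  rw [← sub_eq_zero, ← map_sub, ← sub_eq_zero (a := F' a), ← map_sub]
  exact ⟨AlgHom.apply_eq_zero_of_trace_eq hF' (fun a => (htr a).symm),
    AlgHom.apply_eq_zero_of_trace_eq hF htr⟩

end TraceEq

namespace Matrix

variable {K n G : Type*} [Field K] [Fintype n] [DecidableEq n] [Monoid G]

/-- **Skolem–Noether** for matrix algebras. -/
theorem exists_conj_of_algEquiv (Φ : Matrix n n K ≃ₐ[K] Matrix n n K) :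
    ∃ T : GL n K, ∀ X, Φ X = (T : Matrix n n K) * X * ((T⁻¹ : GL n K) : Matrix n n K) := by
  obtain ⟨T, hT⟩ := ((toLinAlgEquiv'.symm.trans Φ).trans toLinAlgEquiv').eq_linearEquivConjAlgEquiv
  refine ⟨Units.map (toLinAlgEquiv' (R := K) (n := n)).symm.toMonoidHom
    (LinearMap.GeneralLinearGroup.ofLinearEquiv T), fun X => toLinAlgEquiv'.injective ?_⟩
  have := congr($hT (toLinAlgEquiv' X))
  simp only [AlgEquiv.trans_apply, AlgEquiv.symm_apply_apply] at this
  rw [this, map_mul, map_mul]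
  simp only [toLinAlgEquiv'_symm, MulEquiv.toMonoidHom_eq_coe, Units.coe_map, MonoidHom.coe_coe,
    MulEquiv.coe_mk, AlgEquiv.toEquiv_eq_coe, EquivLike.coe_coe, toLinAlgEquiv'_toMatrixAlgEquiv',
    Units.coe_map_inv]
  rfl

noncomputable def toRepresentation (ρ : G →* Matrix n n K) : Representation K G (n → K) :=
  ((toLinAlgEquiv' : Matrix n n K ≃ₐ[K] End K (n → K)) : Matrix n n K →* End K (n → K)).comp ρ

@[simp]
theorem toRepresentation_apply (ρ : G →* Matrix n n K) (g : G) (v : n → K) :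
    toRepresentation ρ g v = ρ g *ᵥ v :=
  toLinAlgEquiv'_apply _ _

theorem exists_conj_of_isIrreducible_of_trace_eq [IsAlgClosed K] (ρ ρ' : G →* Matrix n n K)
    [(toRepresentation ρ).IsIrreducible] (htr : ∀ g, (ρ' g).trace = (ρ g).trace) :
    ∃ T : GL n K, ∀ g, ρ' g = (T : Matrix n n K) * ρ g * ((T⁻¹ : GL n K) : Matrix n n K) := by
  let F (σ : G →* Matrix n n K) : MonoidAlgebra K G →ₐ[K] Matrix n n K :=
    (toLinAlgEquiv' (R := K) (n := n)).symm.toAlgHom.comp (toRepresentation σ).asAlgebraHom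
  have hF_of (σ : G →* Matrix n n K) (g : G) : F σ (MonoidAlgebra.of K G g) = σ g := by
    simp [F, toRepresentation]
  have hF : Function.Surjective (F ρ) :=
    toLinAlgEquiv'.symm.surjective.comp (Representation.asAlgebraHom_surjective _)
  have htrF (a : MonoidAlgebra K G) : (F ρ a).trace = (F ρ' a).trace := by
    induction a using MonoidAlgebra.induction_on with
    | of g => rw [hF_of, hF_of, htr]
    | add x y hx hy => simp only [map_add, trace_add, hx, hy]
    | smul c x hx => simp only [map_smul, trace_smul, hx]
  obtain ⟨Φ, hΦ⟩ := AlgHom.exists_algEquiv_apply_eq_of_trace_eq hF htrF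
  obtain ⟨T, hT⟩ := exists_conj_of_algEquiv Φ
  refine ⟨T, fun g => ?_⟩
  rw [← hF_of, ← hΦ, hF_of, hT]

end Matrix

theorem stmt16_general (π : Type*) [Group π]
    (ρ ρ' : π →* Matrix.SpecialLinearGroup (Fin 2) ℂ)
    (hirr : ¬ ∃ v : Fin 2 → ℂ, v ≠ 0 ∧ ∀ g : π, ∃ c : ℂ,
        Matrix.mulVec (ρ g : Matrix (Fin 2) (Fin 2) ℂ) v = c • v)
    (htr : ∀ g : π, (ρ' g : Matrix (Fin 2) (Fin 2) ℂ).trace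
      = (ρ g : Matrix (Fin 2) (Fin 2) ℂ).trace) :
    ∃ T : Matrix.GeneralLinearGroup (Fin 2) ℂ, ∀ g : π,
      (ρ' g : Matrix (Fin 2) (Fin 2) ℂ) =
        (T : Matrix (Fin 2) (Fin 2) ℂ) * (ρ g : Matrix (Fin 2) (Fin 2) ℂ)
          * ((T⁻¹ : Matrix.GeneralLinearGroup (Fin 2) ℂ) : Matrix (Fin 2) (Fin 2) ℂ) := by
  let toMatrix : SpecialLinearGroup (Fin 2) ℂ →* Matrix (Fin 2) (Fin 2) ℂ :=
    (Units.coeHom _).comp SpecialLinearGroup.toGL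
  have : (toRepresentation (toMatrix.comp ρ)).IsIrreducible :=
    Representation.isIrreducible_of_finrank_eq_two (Module.finrank_fin_fun ℂ) _
      (by simpa [toMatrix] using hirr)
  exact exists_conj_of_isIrreducible_of_trace_eq (toMatrix.comp ρ) (toMatrix.comp ρ') htr

/-- Let `π` be a finitely generated group and `ρ, ρ̃ : π → SL(2,ℂ)` representations with `ρ`
irreducible. If `tr(ρ̃(g)) = tr(ρ(g))` for every `g ∈ π`, then `ρ̃` is `GL(2,ℂ)`-conjugate
to `ρ`. -/
theorem stmt16 (π : Type*) [Group π] [Group.FG π]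
    (ρ ρ' : π →* Matrix.SpecialLinearGroup (Fin 2) ℂ)
    (hirr : ¬ ∃ v : Fin 2 → ℂ, v ≠ 0 ∧ ∀ g : π, ∃ c : ℂ,
        Matrix.mulVec (ρ g : Matrix (Fin 2) (Fin 2) ℂ) v = c • v)
    (htr : ∀ g : π, (ρ' g : Matrix (Fin 2) (Fin 2) ℂ).trace
      = (ρ g : Matrix (Fin 2) (Fin 2) ℂ).trace) :
    ∃ T : Matrix.GeneralLinearGroup (Fin 2) ℂ, ∀ g : π,
      (ρ' g : Matrix (Fin 2) (Fin 2) ℂ) =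
        (T : Matrix (Fin 2) (Fin 2) ℂ) * (ρ g : Matrix (Fin 2) (Fin 2) ℂ)
          * ((T⁻¹ : Matrix.GeneralLinearGroup (Fin 2) ℂ) : Matrix (Fin 2) (Fin 2) ℂ) :=
  stmt16_general π ρ ρ' hirr htr
end

section
/- Let π be a group, E an algebraically closed field of characteristic 0, and ρ : π → SL(2,E) a representation whose image is Zariski dense in SL(2,E). Then for every finite-index normal subgroup π′ of π, the restriction ρ|π′ is irreducible. -/
open Matrix

private lemma upow2 (E : Type*) [Field E] (N : ℕ) :
    (!![1,(1:E);0,1])^N = !![1,(N:E);0,1] := by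
  induction N with
  | zero => simp [Matrix.one_fin_two]
  | succ n ih => rw [pow_succ, ih]; simp [Matrix.mul_fin_two, add_comm]

private lemma lpow2 (E : Type*) [Field E] (N : ℕ) :
    (!![1,(0:E);1,1])^N = !![1,(0:E);(N:E),1] := by
  induction N with
  | zero => simp [Matrix.one_fin_two]
  | succ n ih => rw [pow_succ, ih]; simp [Matrix.mul_fin_two, add_comm]

/-- Over an algebraically closed field `E` of characteristic `0`, if `ρ : π → SL(2,E)` has
Zariski dense image in `SL(2,E)` (every polynomial in the matrix entries vanishing on the
image vanishes on all of `SL(2,E)`), then the restriction of `ρ` to every finite-index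
normal subgroup `π′` of `π` is irreducible. -/
theorem stmt18 (E : Type*) [Field E] [IsAlgClosed E] [CharZero E]
    (π : Type*) [Group π] (ρ : π →* Matrix.SpecialLinearGroup (Fin 2) E)
    (hdense : ∀ f : MvPolynomial (Fin 2 × Fin 2) E,
      (∀ g : π, MvPolynomial.eval
          (fun ij => (ρ g : Matrix (Fin 2) (Fin 2) E) ij.1 ij.2) f = 0) →
        ∀ A : Matrix (Fin 2) (Fin 2) E, A.det = 1 →
          MvPolynomial.eval (fun ij => A ij.1 ij.2) f = 0)
    (π' : Subgroup π) [π'.Normal] (hfi : π'.FiniteIndex) :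
    ¬ ∃ v : Fin 2 → E, v ≠ 0 ∧ ∀ g ∈ π', ∃ c : E,
        Matrix.mulVec (ρ g : Matrix (Fin 2) (Fin 2) E) v = c • v := by
  rintro ⟨v, hv, heig⟩
  classical
  set N := π'.index with hNdef
  have hN0 : (N : E) ≠ 0 := Nat.cast_ne_zero.mpr hfi.index_ne_zero
  -- the generic matrix of polynomial variables
  set X : Matrix (Fin 2) (Fin 2) (MvPolynomial (Fin 2 × Fin 2) E) :=
    Matrix.of fun i j => MvPolynomial.X (i, j) with hX
  set Cv : Fin 2 → MvPolynomial (Fin 2 × Fin 2) E := fun i => MvPolynomial.C (v i) with hCv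
  set f : MvPolynomial (Fin 2 × Fin 2) E :=
    ((X ^ N).mulVec Cv 0) * MvPolynomial.C (v 1)
      - ((X ^ N).mulVec Cv 1) * MvPolynomial.C (v 0) with hf
  -- evaluation of X^N at a matrix A gives A^N
  have hmap : ∀ A : Matrix (Fin 2) (Fin 2) E,
      (X ^ N).map (MvPolynomial.eval (fun ij => A ij.1 ij.2)) = A ^ N := by
    intro A
    have hXA : X.map (MvPolynomial.eval (fun ij => A ij.1 ij.2)) = A := by
      ext i j; simp [hX]
    induction N with
    | zero => simp [Matrix.map_one]
    | succ n ih =>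
        rw [pow_succ, pow_succ, Matrix.map_mul, ih, hXA]
  have heval : ∀ A : Matrix (Fin 2) (Fin 2) E,
      MvPolynomial.eval (fun ij => A ij.1 ij.2) f =
        ((A ^ N).mulVec v 0) * v 1 - ((A ^ N).mulVec v 1) * v 0 := by
    intro A
    have hmv : ∀ i, MvPolynomial.eval (fun ij => A ij.1 ij.2) ((X ^ N).mulVec Cv i)
        = (A ^ N).mulVec v i := by
      intro i
      have hm := hmap A
      simp only [Matrix.mulVec, dotProduct, map_sum, _root_.map_mul, hCv,
        MvPolynomial.eval_C]
      refine Finset.sum_congr rfl fun j _ => ?_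
      rw [← hm, Matrix.map_apply]
    simp only [hf, map_sub, _root_.map_mul, MvPolynomial.eval_C, hmv]
  -- f vanishes on the image of ρ
  have hvan : ∀ g : π, MvPolynomial.eval
      (fun ij => (ρ g : Matrix (Fin 2) (Fin 2) E) ij.1 ij.2) f = 0 := by
    intro g
    rw [heval]
    have hpow : ((ρ g : Matrix (Fin 2) (Fin 2) E)) ^ N
        = ((ρ (g ^ N) : Matrix (Fin 2) (Fin 2) E)) := by
      rw [map_pow]; rfl
    obtain ⟨c, hc⟩ := heig (g ^ N) (π'.pow_index_mem g)
    rw [hpow, hc]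
    simp only [Pi.smul_apply, smul_eq_mul]; ring
  -- hence f vanishes on all of SL2
  have hall : ∀ A : Matrix (Fin 2) (Fin 2) E, A.det = 1 →
      ((A ^ N).mulVec v 0) * v 1 = ((A ^ N).mulVec v 1) * v 0 := by
    intro A hA
    have h := hdense f hvan A hA
    rw [heval] at h
    linear_combination h
  by_cases h1 : v 1 = 0
  · -- use lower unipotent
    have hv0 : v 0 ≠ 0 := by
      intro h0
      apply hv
      funext i
      simp only [Pi.zero_apply]
      fin_cases i
      · exact h0
      · exact h1
    have hc := hall (!![1,(0:E);1,1]) (by simp [Matrix.det_fin_two_of])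
    rw [lpow2] at hc
    have hm0 : (!![1,(0:E);(N:E),1]).mulVec v 0 = v 0 := by
      simp [Matrix.mulVec, dotProduct, Fin.sum_univ_two]
    have hm1 : (!![1,(0:E);(N:E),1]).mulVec v 1 = (N : E) * v 0 + v 1 := by
      simp [Matrix.mulVec, dotProduct, Fin.sum_univ_two]
    rw [hm0, hm1] at hc
    have h2 : (N : E) * (v 0 * v 0) = 0 := by linear_combination -hc
    rcases mul_eq_zero.mp h2 with h | h
    · exact hN0 h
    · rcases mul_eq_zero.mp h with h | h <;> exact hv0 h
  · -- use upper unipotent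
    have hc := hall (!![1,(1:E);0,1]) (by simp [Matrix.det_fin_two_of])
    rw [upow2] at hc
    have hm0 : (!![1,(N:E);(0:E),1]).mulVec v 0 = v 0 + (N : E) * v 1 := by
      simp [Matrix.mulVec, dotProduct, Fin.sum_univ_two]
    have hm1 : (!![1,(N:E);(0:E),1]).mulVec v 1 = v 1 := by
      simp [Matrix.mulVec, dotProduct, Fin.sum_univ_two]
    rw [hm0, hm1] at hc
    have h2 : (N : E) * (v 1 * v 1) = 0 := by linear_combination hc
    rcases mul_eq_zero.mp h2 with h | h
    · exact hN0 h
    · rcases mul_eq_zero.mp h with h | h <;> exact h1 h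
end
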